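/- arXiv:1908.05123 — 4 statements merged into one kernel-verified Lean document; each statement's English description precedes it below -/
import Mathlib

section
/- For every odd positive integer p, the identity (1/4 − p/2)_{(p−1)/2} · (3/4 − p/2)_{(p−1)/2} = (8/8^p) · (2p−1)!/(p−1)! holds in the rational numbers. -/
/-- The rising factorial (Pochhammer symbol) `(x)_n = x(x+1)⋯(x+n-1)` for a rational `x`. -/
noncomputable def risingFactorial (x : ℚ) (n : ℕ) : ℚ := (ascPochhammer ℚ n).eval x

/-!
Write `p = 2k + 1`, so the two arguments are `-k ∓ 1/4`. Peeling off the first factor of each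
rising factorial shows that passing from `k` to `k + 1` multiplies the left side by
`(k + 1)² - 1/16 = (4k + 3)(4k + 5)/16`, and the right side changes by the same factor, since
`(4k + 5)!/(2k + 2)!` gains `(4k + 2)(4k + 3)(4k + 4)(4k + 5)/((2k + 1)(2k + 2)) = 4(4k + 3)(4k + 5)`
against the extra `64` in `8^p`.
-/

lemma risingFactorial_succ_left (x : ℚ) (n : ℕ) :
    risingFactorial x (n + 1) = x * risingFactorial (x + 1) n := by
  simp [risingFactorial, ascPochhammer_succ_left, Polynomial.eval_comp]

lemma risingFactorial_neg_sub_mul_neg_add_succ (a : ℚ) (k : ℕ) :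
    risingFactorial (-(k + 1 : ℕ) - a) (k + 1) * risingFactorial (-(k + 1 : ℕ) + a) (k + 1) =
      (((k : ℚ) + 1) ^ 2 - a ^ 2) *
        (risingFactorial (-k - a) k * risingFactorial (-k + a) k) := by
  rw [risingFactorial_succ_left, risingFactorial_succ_left]
  push_cast
  rw [show -((k : ℚ) + 1) - a + 1 = -k - a by ring, show -((k : ℚ) + 1) + a + 1 = -k + a by ring]
  ring

lemma risingFactorial_quarter_mul (k : ℕ) :
    risingFactorial (-k - 1/4) k * risingFactorial (-k + 1/4) k * (64 ^ k * (2 * k).factorial) =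
      (4 * k + 1).factorial := by
  induction k with
  | zero => simp [risingFactorial]
  | succ k ih =>
    rw [risingFactorial_neg_sub_mul_neg_add_succ, show 2 * (k + 1) = 2 * k + 1 + 1 by ring,
      show 4 * (k + 1) + 1 = 4 * k + 1 + 1 + 1 + 1 + 1 by ring,
      Nat.factorial_succ (2 * k + 1), Nat.factorial_succ (2 * k),
      Nat.factorial_succ (4 * k + 1 + 1 + 1 + 1), Nat.factorial_succ (4 * k + 1 + 1 + 1),
      Nat.factorial_succ (4 * k + 1 + 1), Nat.factorial_succ (4 * k + 1)]
    push_cast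
    linear_combination 64 * (((k : ℚ) + 1) ^ 2 - 1 / 16) * (2 * k + 2) * (2 * k + 1) * ih

theorem stmt_1_general (p : ℕ) (hodd : Odd p) :
    risingFactorial (1/4 - (p : ℚ)/2) ((p - 1)/2) *
      risingFactorial (3/4 - (p : ℚ)/2) ((p - 1)/2) =
      (8 / (8 : ℚ) ^ p) * (Nat.factorial (2*p - 1) : ℚ) / (Nat.factorial (p - 1) : ℚ) := by
  obtain ⟨k, rfl⟩ := hodd
  rw [show (2 * k + 1 - 1) / 2 = k by omega, show 2 * (2 * k + 1) - 1 = 4 * k + 1 by omega,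
    show 2 * k + 1 - 1 = 2 * k by omega, ← risingFactorial_quarter_mul]
  push_cast
  rw [show 1 / 4 - (2 * (k : ℚ) + 1) / 2 = -k - 1 / 4 by ring,
    show 3 / 4 - (2 * (k : ℚ) + 1) / 2 = -k + 1 / 4 by ring,
    show (8 : ℚ) ^ (2 * k + 1) = 64 ^ k * 8 by rw [pow_succ, pow_mul]; norm_num]
  field_simp

theorem stmt_1 (p : ℕ) (hodd : Odd p) (hpos : 0 < p) :
    risingFactorial (1/4 - (p : ℚ)/2) ((p - 1)/2) *
      risingFactorial (3/4 - (p : ℚ)/2) ((p - 1)/2) =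
      (8 / (8 : ℚ) ^ p) * (Nat.factorial (2*p - 1) : ℚ) / (Nat.factorial (p - 1) : ℚ) :=
  stmt_1_general p hodd
end

section
/- For every odd positive integer p, the identity (1/3 − p/2)_{(p−1)/2} · (2/3 − p/2)_{(p−1)/2} = (4/(3^{(3p−3)/2} · 4^p)) · ( ((p−1)/2)! · (3p−2)! ) / ( (p−1)! · ((3p−3)/2)! ) holds in the rational numbers. -/
lemma rf_succ (x : ℚ) (n : ℕ) :
    risingFactorial x (n+1) = x * risingFactorial (x+1) n := by
  simp [risingFactorial, ascPochhammer_succ_left, Polynomial.eval_comp]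

lemma aux (k : ℕ) :
    risingFactorial (1/3 - (2*k+1 : ℚ)/2) k * risingFactorial (2/3 - (2*k+1 : ℚ)/2) k =
      (4 / ((3 : ℚ) ^ (3*k) * (4 : ℚ) ^ (2*k+1))) *
        ((Nat.factorial k : ℚ) * (Nat.factorial (6*k+1) : ℚ)) /
        ((Nat.factorial (2*k) : ℚ) * (Nat.factorial (3*k) : ℚ)) := by
  induction k with
  | zero => simp [risingFactorial]
  | succ k ih =>
    have e1 : (1/3 - (2*(k+1 : ℕ)+1 : ℚ)/2) + 1 = 1/3 - (2*(k:ℚ)+1)/2 := by push_cast; ring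
    have e2 : (2/3 - (2*(k+1 : ℕ)+1 : ℚ)/2) + 1 = 2/3 - (2*(k:ℚ)+1)/2 := by push_cast; ring
    rw [rf_succ, rf_succ, e1, e2]
    have f1 : ((Nat.factorial (6*(k+1)+1)) : ℚ) =
        (6*k+7)*(6*k+6)*(6*k+5)*(6*k+4)*(6*k+3)*(6*k+2) * (Nat.factorial (6*k+1)) := by
      rw [show 6*(k+1)+1 = (6*k+6)+1 from by ring, Nat.factorial_succ,
        show 6*k+6 = (6*k+5)+1 from by ring, Nat.factorial_succ,
        show 6*k+5 = (6*k+4)+1 from by ring, Nat.factorial_succ,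
        show 6*k+4 = (6*k+3)+1 from by ring, Nat.factorial_succ,
        show 6*k+3 = (6*k+2)+1 from by ring, Nat.factorial_succ,
        show 6*k+2 = (6*k+1)+1 from by ring, Nat.factorial_succ]
      push_cast; ring
    have f2 : ((Nat.factorial (2*(k+1))) : ℚ) = (2*k+2)*(2*k+1) * (Nat.factorial (2*k)) := by
      rw [show 2*(k+1) = (2*k+1)+1 from by ring, Nat.factorial_succ,
        show 2*k+1 = (2*k)+1 from by ring, Nat.factorial_succ]
      push_cast; ring
    have f3 : ((Nat.factorial (3*(k+1))) : ℚ) = (3*k+3)*(3*k+2)*(3*k+1) * (Nat.factorial (3*k)) := by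
      rw [show 3*(k+1) = (3*k+2)+1 from by ring, Nat.factorial_succ,
        show 3*k+2 = (3*k+1)+1 from by ring, Nat.factorial_succ,
        show 3*k+1 = (3*k)+1 from by ring, Nat.factorial_succ]
      push_cast; ring
    have f4 : ((Nat.factorial (k+1)) : ℚ) = (k+1) * (Nat.factorial k) := by
      rw [Nat.factorial_succ]; push_cast; ring
    have p1 : ((3:ℚ)) ^ (3*(k+1)) = 27 * 3 ^ (3*k) := by
      rw [show 3*(k+1) = 3*k+3 from by ring, pow_add]; ring
    have p2 : ((4:ℚ)) ^ (2*(k+1)+1) = 16 * 4 ^ (2*k+1) := by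
      rw [show 2*(k+1)+1 = (2*k+1)+2 from by ring, pow_add]; ring
    have nz : ∀ n : ℕ, (Nat.factorial n : ℚ) ≠ 0 := fun n => by
      exact_mod_cast Nat.factorial_ne_zero n
    have h3 : (3:ℚ)^(3*k) ≠ 0 := pow_ne_zero _ (by norm_num)
    have h4 : (4:ℚ)^(2*k+1) ≠ 0 := pow_ne_zero _ (by norm_num)
    rw [mul_mul_mul_comm, ih, f1, f2, f3, f4, p1, p2]
    push_cast
    field_simp
    ring

theorem stmt_2 (p : ℕ) (hodd : Odd p) (hpos : 0 < p) :
    risingFactorial (1/3 - (p : ℚ)/2) ((p - 1)/2) *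
      risingFactorial (2/3 - (p : ℚ)/2) ((p - 1)/2) =
      (4 / ((3 : ℚ) ^ ((3*p - 3)/2) * (4 : ℚ) ^ p)) *
        ((Nat.factorial ((p - 1)/2) : ℚ) * (Nat.factorial (3*p - 2) : ℚ)) /
        ((Nat.factorial (p - 1) : ℚ) * (Nat.factorial ((3*p - 3)/2) : ℚ)) := by
  obtain ⟨k, hk⟩ := hodd
  have h1 : (p - 1)/2 = k := by omega
  have h2 : (3*p - 3)/2 = 3*k := by omega
  have h3 : p - 1 = 2*k := by omega
  have h4 : 3*p - 2 = 6*k+1 := by omega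
  have h5 : (p : ℚ) = 2*k+1 := by rw [hk]; push_cast; ring
  rw [h1, h2, h3, h4, h5, hk]
  exact aux k
end

section
/- For every odd positive integer p, the terminating hypergeometric identity ∑_{n=0}^{(p−1)/2} [ (1/2 − p/2)_n^3 / (1 − p/2)_n^3 ] · (5 + 42(n − p/2)) · (1/64)^n = −(128p^3/(p+1)^3) · ∑_{n=0}^{(p−1)/2} [ (1/2 − p/2)_n^3 / (3/2 + p/2)_n^3 ] · (−1)^n · (2n+1) holds in the rational numbers. -/
/-!
Write `p = 2m + 1`, so that both sums run over `n ≤ m`, and induct on `m`: both sides satisfy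
the same first-order inhomogeneous recurrence in `m`. On the left this is immediate, since
shifting `(m, n) ↦ (m + 1, n + 1)` multiplies each summand by a factor independent of `n`.
On the right it comes from creative telescoping: the summand for `m + 1` minus a suitable
multiple of the summand for `m` is the forward difference in `n` of an explicit hypergeometric
certificate, found by Zeilberger's algorithm.
-/

lemma risingFactorial_zero (x : ℚ) : risingFactorial x 0 = 1 := by
  simp [risingFactorial]

lemma risingFactorial_succ (x : ℚ) (n : ℕ) :
    risingFactorial x (n + 1) = risingFactorial x n * (x + n) :=
  ascPochhammer_succ_eval n x

lemma risingFactorial_add_one (x : ℚ) (hx : x ≠ 0) (n : ℕ) :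
    risingFactorial (x + 1) n = risingFactorial x n * (x + n) / x := by
  rw [eq_div_iff hx, ← risingFactorial_succ, risingFactorial_succ_left, mul_comm]

lemma risingFactorial_pos (x : ℚ) (hx : 0 < x) (n : ℕ) : 0 < risingFactorial x n :=
  ascPochhammer_pos n x hx

lemma risingFactorial_neg_natCast_of_lt {m n : ℕ} (h : m < n) :
    risingFactorial (-(m : ℚ)) n = 0 :=
  ascPochhammer_eval_neg_coe_nat_of_lt h

lemma risingFactorial_half_sub_natCast_ne_zero (m n : ℕ) :
    risingFactorial (1 / 2 - m) n ≠ 0 := by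
  simp only [risingFactorial, ne_eq, ascPochhammer_eval_eq_zero_iff, not_exists, not_and]
  intro k _ hk
  have : ((2 * k + 1 : ℕ) : ℚ) = 2 * m := by push_cast; linarith
  norm_cast at this
  omega

-- The summands of the two sides of the identity, written in terms of `m = (p - 1) / 2`.
noncomputable def leftTerm (m n : ℕ) : ℚ :=
  risingFactorial (-m) n ^ 3 / risingFactorial (1 / 2 - m) n ^ 3 *
    (5 + 42 * ((n : ℚ) - (2 * m + 1) / 2)) * (1 / 64 : ℚ) ^ n

noncomputable def rightTerm (m n : ℕ) : ℚ :=
  risingFactorial (-m) n ^ 3 / risingFactorial (m + 2) n ^ 3 * (-1 : ℚ) ^ n * (2 * n + 1)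

/-- Zeilberger's certificate for `rightTerm`. -/
noncomputable def rightCertificate (m n : ℕ) : ℚ :=
  -(m + 2 : ℚ) ^ 3 * ((n : ℚ) ^ 4 - 6 * (m + 1) ^ 2 * n ^ 2 + (21 * m + 29) * (m + 1) ^ 3) *
    (-1 : ℚ) ^ n * risingFactorial (-m - 1) n ^ 3 /
      (8 * (2 * m + 3) ^ 3 * (m + 1) ^ 3 * risingFactorial (m + 2) n ^ 3)

lemma leftTerm_succ_zero (m : ℕ) : leftTerm (m + 1) 0 = -(42 * m + 58) := by
  simp only [leftTerm, risingFactorial_zero]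
  push_cast
  ring

lemma leftTerm_succ_succ (m n : ℕ) :
    leftTerm (m + 1) (n + 1) = (2 * m + 2) ^ 3 / (64 * (2 * m + 1) ^ 3) * leftTerm m n := by
  have hB := risingFactorial_half_sub_natCast_ne_zero m n
  simp only [leftTerm]
  push_cast
  rw [show -((m : ℚ) + 1) = -m - 1 by ring, show 1 / 2 - ((m : ℚ) + 1) = 1 / 2 - m - 1 by ring,
    risingFactorial_succ_left, risingFactorial_succ_left, sub_add_cancel, sub_add_cancel,
    show (1 / 2 - m - 1 : ℚ) = -(2 * m + 1) / 2 by ring]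
  field_simp
  ring

lemma sum_leftTerm_succ (m : ℕ) :
    ∑ n ∈ Finset.range (m + 2), leftTerm (m + 1) n =
      -(42 * m + 58) + (2 * m + 2) ^ 3 / (64 * (2 * m + 1) ^ 3) *
        ∑ n ∈ Finset.range (m + 1), leftTerm m n := by
  simp only [Finset.sum_range_succ' (leftTerm (m + 1)), leftTerm_succ_succ, leftTerm_succ_zero,
    Finset.mul_sum]
  ring

lemma rightTerm_self_succ (m : ℕ) : rightTerm m (m + 1) = 0 := by
  simp [rightTerm, risingFactorial_neg_natCast_of_lt (Nat.lt_succ_self m)]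

lemma rightCertificate_zero (m : ℕ) :
    rightCertificate m 0 = -(m + 2 : ℚ) ^ 3 * (21 * m + 29) / (8 * (2 * m + 3) ^ 3) := by
  simp only [rightCertificate, risingFactorial_zero]
  field_simp
  ring

lemma rightCertificate_succ_succ_self (m : ℕ) : rightCertificate m (m + 2) = 0 := by
  rw [rightCertificate, show (-(m : ℚ) - 1) = -((m + 1 : ℕ) : ℚ) by push_cast; ring,
    risingFactorial_neg_natCast_of_lt (Nat.lt_succ_self (m + 1))]
  simp

lemma rightCertificate_succ_sub (m n : ℕ) :
    rightCertificate m (n + 1) - rightCertificate m n =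
      rightTerm (m + 1) n - (2 * m + 4) ^ 3 / (64 * (2 * m + 3) ^ 3) * rightTerm m n := by
  have hC := (risingFactorial_pos (m + 2) (by positivity) n).ne'
  have h1 : (-m - 1 : ℚ) ≠ 0 := by rw [← neg_add']; exact neg_ne_zero.mpr (by positivity)
  have hshift := risingFactorial_add_one _ h1 n
  rw [sub_add_cancel] at hshift
  simp only [rightCertificate, rightTerm]
  push_cast
  rw [show -((m : ℚ) + 1) = -m - 1 by ring, show (m : ℚ) + 1 + 2 = m + 2 + 1 by ring,
    hshift, risingFactorial_add_one _ (by positivity), risingFactorial_succ, risingFactorial_succ]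
  field_simp
  ring

lemma sum_rightTerm_succ (m : ℕ) :
    ∑ n ∈ Finset.range (m + 2), rightTerm (m + 1) n =
      (2 * m + 4) ^ 3 / (64 * (2 * m + 3) ^ 3) * ∑ n ∈ Finset.range (m + 1), rightTerm m n +
        (m + 2 : ℚ) ^ 3 * (21 * m + 29) / (8 * (2 * m + 3) ^ 3) := by
  have htel := Finset.sum_range_sub (rightCertificate m) (m + 2)
  simp only [rightCertificate_succ_sub, Finset.sum_sub_distrib, rightCertificate_succ_succ_self,
    rightCertificate_zero, Finset.sum_range_succ (rightTerm m) (m + 1), rightTerm_self_succ,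
    add_zero, ← Finset.mul_sum] at htel
  linear_combination htel

theorem sum_leftTerm_eq (m : ℕ) :
    ∑ n ∈ Finset.range (m + 1), leftTerm m n =
      -(128 * (2 * m + 1) ^ 3 / (2 * m + 2) ^ 3) * ∑ n ∈ Finset.range (m + 1), rightTerm m n := by
  induction m with
  | zero => simp [leftTerm, rightTerm, risingFactorial_zero]; norm_num
  | succ m ih =>
    rw [sum_leftTerm_succ, sum_rightTerm_succ, ih]
    push_cast
    field_simp
    ring

theorem stmt_9_general (p : ℕ) (hodd : Odd p) :
    ∑ n ∈ Finset.range ((p - 1)/2 + 1),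
        (risingFactorial (1/2 - (p : ℚ)/2) n) ^ 3 / (risingFactorial (1 - (p : ℚ)/2) n) ^ 3 *
          (5 + 42 * ((n : ℚ) - (p : ℚ)/2)) * (1/64 : ℚ) ^ n =
      -(128 * (p : ℚ) ^ 3 / ((p : ℚ) + 1) ^ 3) *
        ∑ n ∈ Finset.range ((p - 1)/2 + 1),
          (risingFactorial (1/2 - (p : ℚ)/2) n) ^ 3 /
            (risingFactorial (3/2 + (p : ℚ)/2) n) ^ 3 * (-1 : ℚ) ^ n * (2 * (n : ℚ) + 1) := by
  obtain ⟨m, rfl⟩ := hodd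
  have hm : (2 * m + 1 - 1) / 2 = m := by omega
  have h := sum_leftTerm_eq m
  simp only [leftTerm, rightTerm] at h
  rw [hm]
  push_cast
  rw [show (1 / 2 - (2 * m + 1) / 2 : ℚ) = -m by ring,
    show (1 - (2 * m + 1) / 2 : ℚ) = 1 / 2 - m by ring,
    show (3 / 2 + (2 * m + 1) / 2 : ℚ) = m + 2 by ring,
    show (2 * m + 1 + 1 : ℚ) = 2 * m + 2 by ring]
  exact h

theorem stmt_9 (p : ℕ) (hodd : Odd p) (hpos : 0 < p) :
    ∑ n ∈ Finset.range ((p - 1)/2 + 1),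
        (risingFactorial (1/2 - (p : ℚ)/2) n) ^ 3 / (risingFactorial (1 - (p : ℚ)/2) n) ^ 3 *
          (5 + 42 * ((n : ℚ) - (p : ℚ)/2)) * (1/64 : ℚ) ^ n =
      -(128 * (p : ℚ) ^ 3 / ((p : ℚ) + 1) ^ 3) *
        ∑ n ∈ Finset.range ((p - 1)/2 + 1),
          (risingFactorial (1/2 - (p : ℚ)/2) n) ^ 3 /
            (risingFactorial (3/2 + (p : ℚ)/2) n) ^ 3 * (-1 : ℚ) ^ n * (2 * (n : ℚ) + 1) :=
  stmt_9_general p hodd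
end

section
/- For every prime p ≥ 5, the integer congruence p · ((3p−3)/2)! / ( ((p−1)/2)! )^3 ≡ (−1)^{(p−1)/2} · (3p−2) · (3p−3)! / ( (p−1)! )^3 (mod p^5) holds, where both trinomial coefficients ((3p−3)/2)! / (((p−1)/2)!)^3 and (3p−3)! / ((p−1)!)^3 are integers. -/
/-!
Write `n = (p - 1) / 2`. Clearing the unit denominators and using `2 (p + n) = 3p - 1`, the
congruence follows from `(p + n)! ≡ (-1)ⁿ p (n!)³ (mod p⁴)` and
`(3p - 1)! ≡ 2p² ((p - 1)!)³ (mod p⁵)`. Both come from pairing the factors `N - i` and `N + i`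
around a multiple `N = tp`: modulo `p³`,
`∏_{i=1}^m (N² - i²) ≡ (-1)ᵐ (m!)² (1 - N² ∑_{i=1}^m i⁻²)`, and for `p ≥ 5` the sum
`∑ i⁻²` vanishes mod `p` both for `m = p - 1` (it is the sum of all squares in `𝔽_p`) and, by the
symmetry `i ↦ p - i`, for `m = n`.
-/

open Finset Nat

theorem Nat.factorial_pow_three_dvd (m : ℕ) : m ! ^ 3 ∣ (3 * m)! := by
  simpa [mul_comm] using prod_factorial_dvd_factorial_sum (range 3) fun _ => m

theorem Finset.sq_dvd_prod_add_mul_sub {ι R : Type*} [CommRing R] [DecidableEq ι]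
    (s : Finset ι) (a b : ι → R) (ε : R) :
    ε ^ 2 ∣ ∏ i ∈ s, (a i + ε * b i) -
      (∏ i ∈ s, a i + ε * ∑ i ∈ s, b i * ∏ j ∈ s.erase i, a j) := by
  induction s using Finset.induction_on with
  | empty => simp
  | insert x s hx ih =>
    obtain ⟨r, hr⟩ := ih
    have herase : ∀ i ∈ s, b i * ∏ j ∈ (insert x s).erase i, a j =
        a x * (b i * ∏ j ∈ s.erase i, a j) := fun i hi => by
      rw [erase_insert_of_ne (ne_of_mem_of_not_mem hi hx).symm,
        prod_insert fun h => hx (mem_of_mem_erase h)]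
      ring
    rw [prod_insert hx, prod_insert hx, sum_insert hx, erase_insert hx, sum_congr rfl herase,
      ← mul_sum]
    exact ⟨b x * ∑ i ∈ s, b i * ∏ j ∈ s.erase i, a j + (a x + ε * b x) * r, by
      linear_combination (a x + ε * b x) * hr⟩

theorem Finset.sum_prod_erase_eq_prod_mul_sum_inv {ι K : Type*} [Semifield K] [DecidableEq ι]
    {s : Finset ι} {f : ι → K} (hf : ∀ i ∈ s, f i ≠ 0) :
    ∑ i ∈ s, ∏ j ∈ s.erase i, f j = (∏ i ∈ s, f i) * ∑ i ∈ s, (f i)⁻¹ := by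
  rw [mul_sum]
  refine sum_congr rfl fun i hi => ?_
  rw [← prod_erase_mul s f hi, mul_inv_cancel_right₀ (hf i hi)]

theorem ZMod.sum_univ_eq_sum_range {M : Type*} [AddCommMonoid M] (p : ℕ) [NeZero p]
    (f : ZMod p → M) : ∑ x, f x = ∑ i ∈ range p, f i := by
  refine (sum_nbij' (fun i : ℕ => (i : ZMod p)) ZMod.val (fun _ _ => mem_univ _)
    (fun x _ => mem_range.2 (ZMod.val_lt x)) (fun i hi => ZMod.val_cast_of_lt (mem_range.1 hi))
    (fun x _ => ZMod.natCast_zmod_val x) fun _ _ => rfl).symm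

theorem ZMod.sum_range_inv_sq {p : ℕ} [Fact p.Prime] (hp5 : 5 ≤ p) :
    ∑ i ∈ range (p - 1), ((i + 1 : ZMod p)⁻¹) ^ 2 = 0 := by
  have hsum : ∑ x : ZMod p, (x⁻¹) ^ 2 = 0 := by
    rw [Fintype.sum_equiv (Equiv.inv (ZMod p)) (fun x => x⁻¹ ^ 2) (· ^ 2) fun _ => rfl]
    exact FiniteField.sum_pow_lt_card_sub_one (K := ZMod p) 2 (by rw [ZMod.card]; omega)
  have hsplit := sum_range_succ' (fun i : ℕ => ((i : ZMod p))⁻¹ ^ 2) (p - 1)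
  rw [Nat.sub_add_cancel (by omega), ← ZMod.sum_univ_eq_sum_range p fun x => x⁻¹ ^ 2, hsum]
    at hsplit
  simpa using hsplit.symm

theorem ZMod.sum_range_half_inv_sq {p n : ℕ} [Fact p.Prime] (hp5 : 5 ≤ p)
    (hn : p = 2 * n + 1) :
    ∑ i ∈ range n, ((i + 1 : ZMod p)⁻¹) ^ 2 = 0 := by
  have hsum := ZMod.sum_range_inv_sq hp5
  rw [show p - 1 = n + n by omega, sum_range_add,
    ← sum_range_reflect (fun i => (((n + i : ℕ) : ZMod p) + 1)⁻¹ ^ 2) n] at hsum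
  have hreflect : ∀ i ∈ range n, (((n + (n - 1 - i) : ℕ) : ZMod p) + 1)⁻¹ ^ 2 =
      ((i + 1 : ZMod p)⁻¹) ^ 2 := fun i hi => by
    have hi := mem_range.1 hi
    have hadd : ((n + (n - 1 - i) : ℕ) : ZMod p) + 1 + (i + 1) = 0 := by
      rw [← ZMod.natCast_self p]
      exact_mod_cast congrArg (Nat.cast : ℕ → ZMod p)
        (by omega : n + (n - 1 - i) + 1 + (i + 1) = p)
    rw [eq_neg_of_add_eq_zero_left hadd, inv_neg, neg_sq]
  rw [sum_congr rfl hreflect, ← two_mul] at hsum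
  have htwo : (2 : ZMod p) ≠ 0 := by
    exact_mod_cast (ZMod.natCast_eq_zero_iff 2 p).not.2
      (Nat.not_dvd_of_pos_of_lt two_pos (by omega))
  exact (mul_eq_zero.1 hsum).resolve_left htwo

theorem Nat.cast_descFactorial_pred_mul_ascFactorial_succ {N m : ℕ} (h : m ≤ N) :
    (((N - 1).descFactorial m * (N + 1).ascFactorial m : ℕ) : ℤ) =
      ∏ i ∈ range m, ((N : ℤ) ^ 2 - ((i : ℤ) + 1) ^ 2) := by
  rw [descFactorial_eq_prod_range, ascFactorial_eq_prod_range, ← prod_mul_distrib,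
    Nat.cast_prod]
  refine prod_congr rfl fun i hi => ?_
  rw [Nat.cast_mul, Nat.sub_sub, Nat.cast_sub (by have := mem_range.1 hi; omega)]
  push_cast
  ring

theorem prod_sq_sub_sq_modEq {p N m : ℕ} [Fact p.Prime] (hN : p ∣ N) (hm : m < p)
    (hsum : ∑ i ∈ range m, ((i + 1 : ZMod p)⁻¹) ^ 2 = 0) :
    ∏ i ∈ range m, ((N : ℤ) ^ 2 - ((i : ℤ) + 1) ^ 2) ≡ (-1) ^ m * (m ! : ℤ) ^ 2 [ZMOD p ^ 3] := by
  obtain ⟨k, rfl⟩ := hN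
  have hprod : ∏ i ∈ range m, -((i : ℤ) + 1) ^ 2 = (-1) ^ m * (m ! : ℤ) ^ 2 := by
    rw [prod_neg, card_range, prod_pow, ← prod_range_add_one_eq_factorial]
    push_cast
    rfl
  have hcorr :
      (p : ℤ) ∣ ∑ i ∈ range m, (k : ℤ) ^ 2 * ∏ j ∈ (range m).erase i, -((j : ℤ) + 1) ^ 2 := by
    have hunit : ∀ i ∈ range m, -((i : ZMod p) + 1) ^ 2 ≠ 0 := fun i hi => by
      have hpos : ¬ p ∣ i + 1 :=
        Nat.not_dvd_of_pos_of_lt i.succ_pos (by have := mem_range.1 hi; omega)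
      exact_mod_cast neg_ne_zero.2 (pow_ne_zero 2 ((ZMod.natCast_eq_zero_iff _ _).not.2 hpos))
    rw [← ZMod.intCast_zmod_eq_zero_iff_dvd]
    push_cast
    rw [← mul_sum, sum_prod_erase_eq_prod_mul_sum_inv hunit]
    simp only [inv_neg, sum_neg_distrib, ← inv_pow, hsum, neg_zero, mul_zero]
  obtain ⟨r, hr⟩ := sq_dvd_prod_add_mul_sub (range m) (fun i => -((i : ℤ) + 1) ^ 2)
    (fun _ => (k : ℤ) ^ 2) ((p : ℤ) ^ 2)
  obtain ⟨c, hc⟩ := hcorr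
  have hexpand : ∏ i ∈ range m, (((p * k : ℕ) : ℤ) ^ 2 - ((i : ℤ) + 1) ^ 2) =
      ∏ i ∈ range m, (-((i : ℤ) + 1) ^ 2 + (p : ℤ) ^ 2 * (k : ℤ) ^ 2) :=
    prod_congr rfl fun _ _ => by push_cast; ring
  refine Int.modEq_iff_dvd.2 ⟨-p * r - c, ?_⟩
  rw [← hprod, hexpand]
  linear_combination -hr - (p : ℤ) ^ 2 * hc

theorem factorial_add_half_modEq {p n : ℕ} (hp : p.Prime) (hp5 : 5 ≤ p) (hn : p = 2 * n + 1) :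
    ((p + n)! : ℤ) ≡ (-1) ^ n * p * (n ! : ℤ) ^ 3 [ZMOD p ^ 4] := by
  have : Fact p.Prime := ⟨hp⟩
  have hfactor : (p + n)! = p * n ! * ((p - 1).descFactorial n * (p + 1).ascFactorial n) := by
    rw [← factorial_mul_ascFactorial, ← mul_factorial_pred hp.ne_zero,
      ← factorial_mul_descFactorial (by omega : n ≤ p - 1), show p - 1 - n = n by omega]
    ring
  have hpair := prod_sq_sub_sq_modEq (dvd_refl p) (by omega) (ZMod.sum_range_half_inv_sq hp5 hn)
  have := (hpair.mul_left' (c := p)).mul_left (n ! : ℤ)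
  rw [show (p : ℤ) * p ^ 3 = p ^ 4 by ring,
    ← cast_descFactorial_pred_mul_ascFactorial_succ (by omega)] at this
  rw [hfactor]
  push_cast at this ⊢
  convert this using 1 <;> ring

theorem factorial_three_mul_sub_one_modEq {p : ℕ} (hp : p.Prime) (hp5 : 5 ≤ p) :
    ((3 * p - 1)! : ℤ) ≡ 2 * p ^ 2 * ((p - 1)! : ℤ) ^ 3 [ZMOD p ^ 5] := by
  have : Fact p.Prime := ⟨hp⟩
  have hfactor : (3 * p - 1)! = 2 * p ^ 2 * (p - 1)! *
      ((2 * p - 1).descFactorial (p - 1) * (2 * p + 1).ascFactorial (p - 1)) := by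
    rw [show 3 * p - 1 = 2 * p + (p - 1) by omega, ← factorial_mul_ascFactorial,
      ← mul_factorial_pred (by omega : 2 * p ≠ 0),
      ← factorial_mul_descFactorial (by omega : p - 1 ≤ 2 * p - 1),
      show 2 * p - 1 - (p - 1) = p by omega,
      ← mul_factorial_pred hp.ne_zero]
    ring
  have hpair := prod_sq_sub_sq_modEq (dvd_mul_left p 2) (by omega) (ZMod.sum_range_inv_sq hp5)
  rw [(hp.even_sub_one (by omega)).neg_one_pow, one_mul] at hpair
  have := (hpair.mul_left' (c := (p : ℤ) ^ 2)).mul_left (2 * (p - 1)! : ℤ)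
  rw [← pow_add, ← cast_descFactorial_pred_mul_ascFactorial_succ (by omega)] at this
  rw [hfactor]
  push_cast at this ⊢
  convert this using 1 <;> ring

theorem two_mul_factorial_add_half_modEq {p n : ℕ} (hp : p.Prime) (hp5 : 5 ≤ p)
    (hn : p = 2 * n + 1) :
    2 * p * ((p - 1)! : ℤ) ^ 3 * ((p + n)! : ℤ) ≡
      (-1) ^ n * (n ! : ℤ) ^ 3 * ((3 * p - 1)! : ℤ) [ZMOD p ^ 5] := by
  have hI := (factorial_add_half_modEq hp hp5 hn).mul_left' (c := p)
  rw [show (p : ℤ) * p ^ 4 = p ^ 5 by ring] at hI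
  calc 2 * p * ((p - 1)! : ℤ) ^ 3 * ((p + n)! : ℤ)
      = 2 * ((p - 1)! : ℤ) ^ 3 * (p * (p + n)!) := by ring
    _ ≡ 2 * ((p - 1)! : ℤ) ^ 3 * (p * ((-1) ^ n * p * (n ! : ℤ) ^ 3)) [ZMOD p ^ 5] :=
      hI.mul_left _
    _ = (-1) ^ n * (n ! : ℤ) ^ 3 * (2 * p ^ 2 * ((p - 1)! : ℤ) ^ 3) := by ring
    _ ≡ (-1) ^ n * (n ! : ℤ) ^ 3 * ((3 * p - 1)! : ℤ) [ZMOD p ^ 5] :=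
      ((factorial_three_mul_sub_one_modEq hp hp5).mul_left _).symm

theorem prime_mul_trinomial_modEq {p n : ℕ} (hp : p.Prime) (hp5 : 5 ≤ p) (hn : p = 2 * n + 1) :
    (p : ℤ) * (((3 * n)! / n ! ^ 3 : ℕ) : ℤ) ≡
      (-1) ^ n * (3 * p - 2) * (((3 * (p - 1))! / (p - 1)! ^ 3 : ℕ) : ℤ) [ZMOD p ^ 5] := by
  have hfact : ∀ m < p, IsCoprime (p : ℤ) (m ! : ℤ) :=
    fun m hm => Nat.isCoprime_iff_coprime.2 (hp.coprime_factorial_of_lt hm)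
  have hunit : IsCoprime ((p : ℤ) ^ 5) ((3 * p - 1) * ((n ! : ℤ) ^ 3 * ((p - 1)! : ℤ) ^ 3)) :=
    (IsCoprime.mul_right ⟨3, -1, by ring⟩ (((hfact n (by omega)).pow_right).mul_right
      (hfact (p - 1) (by omega)).pow_right)).pow_left
  -- after multiplying by this unit, `2 (p + n) = 3p - 1` turns the claim into
  -- `two_mul_factorial_add_half_modEq`
  refine Int.modEq_iff_dvd.2 (hunit.dvd_of_dvd_mul_left ?_)
  have e1 : (((3 * n)! / n ! ^ 3 : ℕ) : ℤ) * (n ! : ℤ) ^ 3 = ((3 * n)! : ℤ) := by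
    exact_mod_cast Nat.div_mul_cancel (factorial_pow_three_dvd n)
  have e2 : (((3 * (p - 1))! / (p - 1)! ^ 3 : ℕ) : ℤ) * ((p - 1)! : ℤ) ^ 3 =
      ((3 * (p - 1))! : ℤ) := by
    exact_mod_cast Nat.div_mul_cancel (factorial_pow_three_dvd (p - 1))
  have f1 : ((p + n)! : ℤ) = (3 * n + 1) * ((3 * n)! : ℤ) := by
    rw [show p + n = 3 * n + 1 by omega, factorial_succ]; push_cast; ring
  have f2 : ((3 * p - 1)! : ℤ) = (3 * p - 1) * (3 * p - 2) * ((3 * (p - 1))! : ℤ) := by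
    rw [show 3 * p - 1 = 3 * (p - 1) + 1 + 1 by omega, factorial_succ, factorial_succ]
    push_cast [Nat.cast_sub (by omega : 1 ≤ p)]
    ring
  have hpn : (p : ℤ) = 2 * n + 1 := by exact_mod_cast hn
  have key := two_mul_factorial_add_half_modEq hp hp5 hn
  rw [f1, f2] at key
  refine key.dvd.trans (dvd_of_eq ?_)
  linear_combination (3 * p - 1) * ((p - 1)! : ℤ) ^ 3 * p * e1
    - (3 * p - 1) * (3 * p - 2) * (-1) ^ n * (n ! : ℤ) ^ 3 * e2
    + 3 * ((p - 1)! : ℤ) ^ 3 * p * ((3 * n)! : ℤ) * hpn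

theorem stmt_19 (p : ℕ) (hp : p.Prime) (hge : 5 ≤ p) :
    (Nat.factorial ((p - 1)/2)) ^ 3 ∣ Nat.factorial ((3*p - 3)/2) ∧
    (Nat.factorial (p - 1)) ^ 3 ∣ Nat.factorial (3*p - 3) ∧
    ((p : ℤ) ^ 5 ∣
      (p : ℤ) * ((Nat.factorial ((3*p - 3)/2) / (Nat.factorial ((p - 1)/2)) ^ 3 : ℕ) : ℤ) -
        (-1 : ℤ) ^ ((p - 1)/2) * (3 * (p : ℤ) - 2) *
          ((Nat.factorial (3*p - 3) / (Nat.factorial (p - 1)) ^ 3 : ℕ) : ℤ)) := by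
  obtain ⟨n, hn⟩ := hp.odd_of_ne_two (by omega)
  rw [show (p - 1) / 2 = n by omega, show (3 * p - 3) / 2 = 3 * n by omega,
    show 3 * p - 3 = 3 * (p - 1) by omega]
  exact ⟨factorial_pow_three_dvd n, factorial_pow_three_dvd (p - 1),
    (prime_mul_trinomial_modEq hp hge hn).symm.dvd⟩
end
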